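/- arXiv:1309.4513 — 8 statements merged into one kernel-verified Lean document; each statement's English description precedes it below -/
import Mathlib

section
/- Let pi_11, pi_10, P_d, P_fa be reals with 0 < pi_10 < pi_11 < 1, 0 < P_fa < P_d < 1, pi_11/pi_10 < P_d/P_fa, and 1 + (pi_11 - pi_10) > (P_fa/P_d)*(pi_11/pi_10). Then (1 - pi_11)/(1 - pi_10) + (P_d/P_fa)*log(pi_11/pi_10) > pi_11/pi_10 + (P_d/P_fa)*log((1 - pi_11)/(1 - pi_10)). -/
open Real

/- The statement reduces to `a - b < R (log a - log b)` for `a = π11/π10 > 1`,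
`b = (1 - π11)/(1 - π10) ∈ (0, 1)` and `R = Pd/Pfa > a`. Since `log a - log b > 0` it suffices to
take `R = a`, and then `a log a ≥ a - 1` and `-a log b > a (1 - b) ≥ 1 - b` add up to the claim. -/

theorem sub_lt_mul_log_sub_log {a b : ℝ} (ha : 1 ≤ a) (hb0 : 0 < b) (hb1 : b < 1) :
    a - b < a * (log a - log b) := by
  have ha0 : 0 < a := by linarith
  have hloga : 1 - a⁻¹ ≤ log a := one_sub_inv_le_log_of_pos ha0
  have hlogb : log b < b - 1 := log_lt_sub_one_of_pos hb0 hb1.ne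
  have hmul_log_a : a - 1 ≤ a * log a := by
    have h := mul_le_mul_of_nonneg_left hloga ha0.le
    rwa [mul_sub, mul_one, mul_inv_cancel₀ ha0.ne'] at h
  have hmul_log_b : a * (1 - b) < a * -log b := mul_lt_mul_of_pos_left (by linarith) ha0
  linarith [mul_nonneg (sub_nonneg.2 ha) (sub_pos.2 hb1).le]

theorem stmt_2_general (π11 π10 Pd Pfa : ℝ)
    (h10 : 0 < π10) (h1110 : π10 < π11) (h11 : π11 < 1)
    (hratio : π11 / π10 < Pd / Pfa) :
    (1 - π11) / (1 - π10) + (Pd / Pfa) * Real.log (π11 / π10) >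
      π11 / π10 + (Pd / Pfa) * Real.log ((1 - π11) / (1 - π10)) := by
  set a := π11 / π10
  set b := (1 - π11) / (1 - π10)
  have ha : 1 < a := (one_lt_div h10).2 h1110
  have hb0 : 0 < b := div_pos (by linarith) (by linarith)
  have hb1 : b < 1 := (div_lt_one (by linarith)).2 (by linarith)
  have hlog : 0 < log a - log b := by linarith [log_pos ha, log_neg hb0 hb1]
  have key : a - b < Pd / Pfa * (log a - log b) :=
    (sub_lt_mul_log_sub_log ha.le hb0 hb1).trans (mul_lt_mul_of_pos_right hratio hlog)
  linarith

theorem stmt_2 (π11 π10 Pd Pfa : ℝ)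
    (h10 : 0 < π10) (h1110 : π10 < π11) (h11 : π11 < 1)
    (hfa : 0 < Pfa) (hdfa : Pfa < Pd) (hd : Pd < 1)
    (hratio : π11 / π10 < Pd / Pfa)
    (hkey : 1 + (π11 - π10) > (Pfa / Pd) * (π11 / π10)) :
    (1 - π11) / (1 - π10) + (Pd / Pfa) * Real.log (π11 / π10) >
      π11 / π10 + (Pd / Pfa) * Real.log ((1 - π11) / (1 - π10)) :=
  stmt_2_general π11 π10 Pd Pfa h10 h1110 h11 hratio
end

section
/- Let pi_11, pi_10, P_d, P_fa be reals with 0 < pi_10 < pi_11 < 1, 0 < P_fa < P_d < 1, and (1 - pi_11)/(1 - pi_10) > ((1 - P_d)/(1 - P_fa)) * (1 - (pi_11 - pi_10)). Then pi_11/pi_10 + ((1-P_d)/(1-P_fa))*log((1-pi_11)/(1-pi_10)) > (1-pi_11)/(1-pi_10) + ((1-P_d)/(1-P_fa))*log(pi_11/pi_10). -/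
/-!
Write `a = π11/π10 > 1`, `b = (1 - π11)/(1 - π10) < 1` and `r = (1 - Pd)/(1 - Pfa) > 0`; the claim is
`r (log a - log b) < a - b`. Bounding `log a ≤ a - 1` and `-log b = log b⁻¹ ≤ b⁻¹ - 1` reduces it to
`r ((a - 1) + (b⁻¹ - 1)) < a - b`. With `d = π11 - π10` both sides factor through `d / π10`:
`(a - 1) + (b⁻¹ - 1) = d/π10 · (1 - d)/(1 - π11)` and `a - b = d/π10 · 1/(1 - π10)`,
so what remains is exactly the hypothesis `r (1 - d) < b`.
-/

open Real

lemma log_sub_log_le_sub_one_add_inv_sub_one {a b : ℝ} (ha : 0 < a) (hb : 0 < b) :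
    log a - log b ≤ (a - 1) + (b⁻¹ - 1) := by
  have hlog_a := log_le_sub_one_of_pos ha
  have hlog_inv_b := log_le_sub_one_of_pos (inv_pos.mpr hb)
  rw [log_inv] at hlog_inv_b
  linarith

lemma add_mul_log_lt_add_mul_log {a b r : ℝ} (ha : 0 < a) (hb : 0 < b) (hr : 0 ≤ r)
    (h : r * ((a - 1) + (b⁻¹ - 1)) < a - b) :
    b + r * log a < a + r * log b := by
  have := mul_le_mul_of_nonneg_left (log_sub_log_le_sub_one_add_inv_sub_one ha hb) hr
  rw [mul_sub] at this
  linarith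

section Ratios

variable {p q : ℝ}

lemma div_sub_one_sub_div_one_sub (hp : 0 < p) (hp1 : p < 1) :
    q / p - (1 - q) / (1 - p) = (q - p) / p * (1 / (1 - p)) := by
  have : 1 - p ≠ 0 := by linarith
  field_simp
  ring

lemma div_sub_one_add_inv_div_sub_one (hp : 0 < p) (hp1 : p < 1) (hq1 : q < 1) :
    (q / p - 1) + (((1 - q) / (1 - p))⁻¹ - 1) = (q - p) / p * ((1 - (q - p)) / (1 - q)) := by
  have : 1 - p ≠ 0 := by linarith
  have : 1 - q ≠ 0 := by linarith
  field_simp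
  ring

lemma mul_ratio_deviation_lt_ratio_sub {r : ℝ} (hp : 0 < p) (hpq : p < q) (hq1 : q < 1)
    (h : r * (1 - (q - p)) < (1 - q) / (1 - p)) :
    r * ((q / p - 1) + (((1 - q) / (1 - p))⁻¹ - 1)) < q / p - (1 - q) / (1 - p) := by
  have hp1 : p < 1 := hpq.trans hq1
  have hq1' : 0 < 1 - q := by linarith
  have hp1' : 0 < 1 - p := by linarith
  have hscaled : r * (1 - (q - p)) / (1 - q) < 1 / (1 - p) := by
    rw [div_lt_iff₀ hq1', one_div_mul_eq_div]
    exact h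
  have hd : 0 < (q - p) / p := div_pos (by linarith) hp
  rw [div_sub_one_add_inv_div_sub_one hp hp1 hq1, div_sub_one_sub_div_one_sub hp hp1,
    mul_left_comm, ← mul_div_assoc]
  exact mul_lt_mul_of_pos_left hscaled hd

end Ratios

theorem stmt_3_general (π11 π10 Pd Pfa : ℝ)
    (h10 : 0 < π10) (h1110 : π10 < π11) (h11 : π11 < 1)
    (hdfa : Pfa < Pd) (hd : Pd < 1)
    (hkey : (1 - π11) / (1 - π10) > ((1 - Pd) / (1 - Pfa)) * (1 - (π11 - π10))) :
    π11 / π10 + ((1 - Pd) / (1 - Pfa)) * Real.log ((1 - π11) / (1 - π10)) >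
      (1 - π11) / (1 - π10) + ((1 - Pd) / (1 - Pfa)) * Real.log (π11 / π10) := by
  have hr : 0 ≤ (1 - Pd) / (1 - Pfa) := div_nonneg (by linarith) (by linarith)
  exact add_mul_log_lt_add_mul_log (div_pos (h10.trans h1110) h10)
    (div_pos (by linarith) (by linarith)) hr
    (mul_ratio_deviation_lt_ratio_sub h10 h1110 h11 hkey)

theorem stmt_3 (π11 π10 Pd Pfa : ℝ)
    (h10 : 0 < π10) (h1110 : π10 < π11) (h11 : π11 < 1)
    (hfa : 0 < Pfa) (hdfa : Pfa < Pd) (hd : Pd < 1)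
    (hkey : (1 - π11) / (1 - π10) > ((1 - Pd) / (1 - Pfa)) * (1 - (π11 - π10))) :
    π11 / π10 + ((1 - Pd) / (1 - Pfa)) * Real.log ((1 - π11) / (1 - π10)) >
      (1 - π11) / (1 - π10) + ((1 - Pd) / (1 - Pfa)) * Real.log (π11 / π10) :=
  stmt_3_general π11 π10 Pd Pfa h10 h1110 h11 hdfa hd hkey
end

section
/- Let t, p, P_d, P_fa be reals with 0 <= t < 1/2, 0 < P_fa < 1/2 < P_d < 1, and 0 <= p <= 1. Define pi_11 = t*p*(1 - 2*P_d) + P_d and pi_10 = t*p*(1 - 2*P_fa) + P_fa, and assume 0 < pi_10 < pi_11 < 1. Then (1 - 2*P_fa)*((1 - pi_11)/(1 - pi_10) - pi_11/pi_10) + (1 - 2*P_d)*log(((1 - pi_10)/(1 - pi_11))*(pi_11/pi_10)) < 0. -/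
section BernoulliRatios

variable {a b : ℝ}

theorem one_sub_div_one_sub_lt_div (ha : 0 < a) (hab : a < b) (hb : b < 1) :
    (1 - b) / (1 - a) < b / a :=
  calc (1 - b) / (1 - a) < 1 := (div_lt_one (by linarith)).2 (by linarith)
    _ < b / a := (one_lt_div ha).2 hab

theorem one_lt_odds_ratio (ha : 0 < a) (hab : a < b) (hb : b < 1) :
    1 < (1 - a) / (1 - b) * (b / a) :=
  one_lt_mul_of_lt_of_le ((one_lt_div (by linarith)).2 (by linarith))
    ((one_lt_div ha).2 hab).le

end BernoulliRatios

theorem stmt_4_general (Pd Pfa : ℝ)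
    (hfa2 : Pfa < 1/2) (hd2 : 1/2 < Pd)
    (π11 π10 : ℝ)
    (h10 : 0 < π10) (h1110 : π10 < π11) (h11 : π11 < 1) :
    (1 - 2 * Pfa) * ((1 - π11) / (1 - π10) - π11 / π10) +
      (1 - 2 * Pd) * Real.log (((1 - π10) / (1 - π11)) * (π11 / π10)) < 0 := by
  have hratio : (1 - 2 * Pfa) * ((1 - π11) / (1 - π10) - π11 / π10) < 0 :=
    mul_neg_of_pos_of_neg (by linarith)
      (sub_neg.2 (one_sub_div_one_sub_lt_div h10 h1110 h11))
  have hlog : (1 - 2 * Pd) * Real.log (((1 - π10) / (1 - π11)) * (π11 / π10)) < 0 :=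
    mul_neg_of_neg_of_pos (by linarith) (Real.log_pos (one_lt_odds_ratio h10 h1110 h11))
  linarith

theorem stmt_4 (t p Pd Pfa : ℝ)
    (ht0 : 0 ≤ t) (ht : t < 1/2)
    (hfa : 0 < Pfa) (hfa2 : Pfa < 1/2) (hd2 : 1/2 < Pd) (hd : Pd < 1)
    (hp0 : 0 ≤ p) (hp1 : p ≤ 1)
    (π11 π10 : ℝ)
    (hπ11 : π11 = t * p * (1 - 2 * Pd) + Pd)
    (hπ10 : π10 = t * p * (1 - 2 * Pfa) + Pfa)
    (h10 : 0 < π10) (h1110 : π10 < π11) (h11 : π11 < 1) :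
    (1 - 2 * Pfa) * ((1 - π11) / (1 - π10) - π11 / π10) +
      (1 - 2 * Pd) * Real.log (((1 - π10) / (1 - π11)) * (π11 / π10)) < 0 :=
  stmt_4_general Pd Pfa hfa2 hd2 π11 π10 h10 h1110 h11
end

section
/- Let t be a real with 0 <= t < 1/2, and let P_d, P_fa satisfy 0 < P_fa < P_d < 1. With pi_11(t) = t*(1 - 2*P_d) + P_d, pi_10(t) = t*(1 - 2*P_fa) + P_fa, and D(t) the binary KL divergence between (pi_11(t), 1 - pi_11(t)) and (pi_10(t), 1 - pi_10(t)), the function D is strictly decreasing on [0, 1/2). -/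
/-!
Write `p = π₁₁(t)`, `q = π₁₀(t)`. Both are affine in `t` and shrink towards `1/2` like `1 - 2t`,
so `(1 - 2t) D'(t)` is `-2` times the derivative of the binary divergence `KL(p, q)` along the ray
from `(1/2, 1/2)` through `(p, q)`. Since the divergence is jointly convex and vanishes at
`(1/2, 1/2)`, that radial derivative exceeds `KL(p, q) ≥ 0`. Both inequalities come from
`log x ≤ x - 1`, strictly at `x = p / q ≠ 1`.
-/

open Real Set

noncomputable def binKL (p q : ℝ) : ℝ :=
  p * log (p / q) + (1 - p) * log ((1 - p) / (1 - q))

lemma sub_le_mul_log_div {a b : ℝ} (ha : 0 < a) (hb : 0 < b) : a - b ≤ a * log (a / b) := by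
  have h := one_sub_inv_le_log_of_pos (div_pos ha hb)
  rw [inv_div] at h
  calc a - b = a * (1 - b / a) := by field_simp
    _ ≤ a * log (a / b) := mul_le_mul_of_nonneg_left h ha.le

lemma binKL_nonneg {p q : ℝ} (hp : p ∈ Ioo 0 1) (hq : q ∈ Ioo 0 1) : 0 ≤ binKL p q := by
  have h₁ := sub_le_mul_log_div hp.1 hq.1
  have h₂ := sub_le_mul_log_div (sub_pos.2 hp.2) (sub_pos.2 hq.2)
  unfold binKL
  linarith

lemma binKL_lt_radial_deriv {p q : ℝ} (hp : p ∈ Ioo 0 1) (hq : q ∈ Ioo 0 1) (hpq : p ≠ q) :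
    binKL p q < (p - 1/2) * (log (p / q) - log ((1 - p) / (1 - q)))
      - (q - 1/2) * (p / q - (1 - p) / (1 - q)) := by
  have hq₀ : q ≠ 0 := hq.1.ne'
  have hq₁ : 1 - q ≠ 0 := (sub_pos.2 hq.2).ne'
  have hx : log (p / q) < p / q - 1 :=
    log_lt_sub_one_of_pos (div_pos hp.1 hq.1) (by rwa [ne_eq, div_eq_one_iff_eq hq₀])
  have hy : log ((1 - p) / (1 - q)) ≤ (1 - p) / (1 - q) - 1 :=
    log_le_sub_one_of_pos (div_pos (sub_pos.2 hp.2) (sub_pos.2 hq.2))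
  have hqx : q * (p / q) = p := mul_div_cancel₀ p hq₀
  have hqy : (1 - q) * ((1 - p) / (1 - q)) = 1 - p := mul_div_cancel₀ _ hq₁
  unfold binKL
  linarith

lemma hasDerivAt_binKL {f g : ℝ → ℝ} {f' g' t : ℝ} (hf : HasDerivAt f f' t)
    (hg : HasDerivAt g g' t) (hft : f t ∈ Ioo 0 1) (hgt : g t ∈ Ioo 0 1) :
    HasDerivAt (fun s => binKL (f s) (g s))
      (f' * (log (f t / g t) - log ((1 - f t) / (1 - g t)))
        - g' * (f t / g t - (1 - f t) / (1 - g t))) t := by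
  have hf₀ := hft.1.ne'
  have hg₀ := hgt.1.ne'
  have hf₁ := (sub_pos.2 hft.2).ne'
  have hg₁ := (sub_pos.2 hgt.2).ne'
  have h₁ := (hf.div hg hg₀).log (div_ne_zero hf₀ hg₀)
  have h₂ := ((hf.const_sub 1).div (hg.const_sub 1) hg₁).log (div_ne_zero hf₁ hg₁)
  refine ((hf.mul h₁).add ((hf.const_sub 1).mul h₂)).congr_deriv ?_
  simp only [Pi.div_apply]
  field_simp
  ring

lemma mul_one_sub_two_mul_add_mem_Ioo {c t : ℝ} (hc : c ∈ Ioo 0 1) (ht : t ∈ Icc 0 1) :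
    t * (1 - 2 * c) + c ∈ Ioo 0 1 := by
  have hc' : 1 - c ∈ Ioo (0 : ℝ) 1 := ⟨sub_pos.2 hc.2, sub_lt_self 1 hc.1⟩
  convert convex_Ioo (0 : ℝ) 1 hc hc' (sub_nonneg.2 ht.2) ht.1 (sub_add_cancel 1 t) using 1
  simp only [smul_eq_mul]
  ring

theorem stmt_7 (Pd Pfa : ℝ)
    (hfa : 0 < Pfa) (hdfa : Pfa < Pd) (hd : Pd < 1) :
    StrictAntiOn (fun t : ℝ =>
      (t * (1 - 2 * Pd) + Pd) *
          Real.log ((t * (1 - 2 * Pd) + Pd) / (t * (1 - 2 * Pfa) + Pfa)) +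
        (1 - (t * (1 - 2 * Pd) + Pd)) *
          Real.log ((1 - (t * (1 - 2 * Pd) + Pd)) / (1 - (t * (1 - 2 * Pfa) + Pfa))))
      (Set.Ico (0 : ℝ) (1/2)) := by
  have hIcc : Ico (0 : ℝ) (1/2) ⊆ Icc 0 1 :=
    Ico_subset_Icc_self.trans (Icc_subset_Icc_right (by norm_num))
  have hp := fun t (ht : t ∈ Ico (0 : ℝ) (1/2)) =>
    mul_one_sub_two_mul_add_mem_Ioo (c := Pd) ⟨hfa.trans hdfa, hd⟩ (hIcc ht)
  have hq := fun t (ht : t ∈ Ico (0 : ℝ) (1/2)) =>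
    mul_one_sub_two_mul_add_mem_Ioo (c := Pfa) ⟨hfa, hdfa.trans hd⟩ (hIcc ht)
  have hderiv := fun t (ht : t ∈ Ico (0 : ℝ) (1/2)) =>
    hasDerivAt_binKL ((hasDerivAt_mul_const (1 - 2 * Pd)).add_const Pd)
      ((hasDerivAt_mul_const (1 - 2 * Pfa)).add_const Pfa) (hp t ht) (hq t ht)
  refine strictAntiOn_of_hasDerivWithinAt_neg (convex_Ico 0 (1/2))
    (fun t ht => (hderiv t ht).continuousAt.continuousWithinAt)
    (fun t ht => (hderiv t (interior_subset ht)).hasDerivWithinAt) fun t ht => ?_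
  rw [interior_Ico] at ht
  have ht' := Ioo_subset_Ico_self ht
  have h2t : 0 < 1 - 2 * t := by linarith [ht.2]
  have hqp : t * (1 - 2 * Pfa) + Pfa < t * (1 - 2 * Pd) + Pd := by
    linarith [mul_pos h2t (sub_pos.2 hdfa)]
  have hB := (binKL_nonneg (hp t ht') (hq t ht')).trans_lt
    (binKL_lt_radial_deriv (hp t ht') (hq t ht') hqp.ne')
  refine neg_of_mul_neg_right (a := 1 - 2 * t) ?_ h2t.le
  linear_combination 2 * hB
end

section
/- For integers a >= 2, K >= 1, and 1 <= k <= K, (a+1)^(K+1) * (a^(K-k+1) - 1) - a^(K+1) * ((a+1)^(K-k+1) - 1) >= 0. -/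
/-!
Write `m = K - k + 1`. Expanding `x ^ m - 1 = (x - 1) ∑_{i<m} x ^ i` and
`(x + 1) ^ m - 1 = x ∑_{i<m} (x + 1) ^ i`, the inequality splits into the termwise bounds
`x ^ (K + 2) (x + 1) ^ i ≤ (x + 1) ^ (K + 1) x ^ i (x - 1)` for `i < m ≤ K`. After cancelling
`x ^ i (x + 1) ^ i` these read `x ^ (j + 1) ≤ (x + 1) ^ j (x - 1)` with `j = K + 1 - i ≥ 2`,
which holds for `x ≥ 2` by induction on `j`, starting from `x ^ 2 - x - 1 ≥ 0`.
-/

open Finset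

variable {R : Type*} [CommRing R] [LinearOrder R] [IsStrictOrderedRing R] {x : R}

lemma pow_succ_le_add_one_pow_mul_sub_one (hx : 2 ≤ x) {j : ℕ} (hj : 2 ≤ j) :
    x ^ (j + 1) ≤ (x + 1) ^ j * (x - 1) := by
  induction j, hj using Nat.le_induction with
  | base =>
    have : 0 ≤ x * (x - 2) := mul_nonneg (by linarith) (by linarith)
    linear_combination this + hx
  | succ j _ ih =>
    calc x ^ (j + 1 + 1) = x * x ^ (j + 1) := pow_succ' x _
      _ ≤ (x + 1) * x ^ (j + 1) := by gcongr; linarith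
      _ ≤ (x + 1) * ((x + 1) ^ j * (x - 1)) := by gcongr
      _ = (x + 1) ^ (j + 1) * (x - 1) := by ring

lemma pow_succ_mul_add_one_pow_le (hx : 2 ≤ x) {i n : ℕ} (hin : i + 2 ≤ n) :
    x ^ (n + 1) * (x + 1) ^ i ≤ (x + 1) ^ n * x ^ i * (x - 1) := by
  obtain ⟨j, rfl⟩ := Nat.exists_eq_add_of_le hin
  have hj := pow_succ_le_add_one_pow_mul_sub_one hx (j := 2 + j) (by omega)
  calc x ^ (i + 2 + j + 1) * (x + 1) ^ i
      = x ^ i * (x + 1) ^ i * x ^ (2 + j + 1) := by ring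
    _ ≤ x ^ i * (x + 1) ^ i * ((x + 1) ^ (2 + j) * (x - 1)) := by gcongr
    _ = (x + 1) ^ (i + 2 + j) * x ^ i * (x - 1) := by ring

lemma pow_succ_mul_add_one_pow_sub_one_le (hx : 2 ≤ x) {m K : ℕ} (hmK : m ≤ K) :
    x ^ (K + 1) * ((x + 1) ^ m - 1) ≤ (x + 1) ^ (K + 1) * (x ^ m - 1) := by
  have hgeom : (∑ i ∈ range m, (x + 1) ^ i) * x = (x + 1) ^ m - 1 := by
    simpa using geom_sum_mul (x + 1) m
  rw [← hgeom, ← geom_sum_mul, sum_mul, sum_mul, mul_sum, mul_sum]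
  refine sum_le_sum fun i hi => ?_
  calc x ^ (K + 1) * ((x + 1) ^ i * x) = x ^ (K + 1 + 1) * (x + 1) ^ i := by ring
    _ ≤ (x + 1) ^ (K + 1) * x ^ i * (x - 1) :=
        pow_succ_mul_add_one_pow_le hx (by simp only [mem_range] at hi; omega)
    _ = (x + 1) ^ (K + 1) * (x ^ i * (x - 1)) := mul_assoc _ _ _

theorem stmt_11_general (a K k : ℕ) (ha : 2 ≤ a) (hk1 : 1 ≤ k) (hkK : k ≤ K) :
    ((a : ℤ) + 1) ^ (K + 1) * ((a : ℤ) ^ (K - k + 1) - 1) -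
      (a : ℤ) ^ (K + 1) * (((a : ℤ) + 1) ^ (K - k + 1) - 1) ≥ 0 :=
  sub_nonneg.mpr <|
    pow_succ_mul_add_one_pow_sub_one_le (by exact_mod_cast ha) (by omega : K - k + 1 ≤ K)

theorem stmt_11 (a K k : ℕ) (ha : 2 ≤ a) (hK : 1 ≤ K) (hk1 : 1 ≤ k) (hkK : k ≤ K) :
    ((a : ℤ) + 1) ^ (K + 1) * ((a : ℤ) ^ (K - k + 1) - 1) -
      (a : ℤ) ^ (K + 1) * (((a : ℤ) + 1) ^ (K - k + 1) - 1) ≥ 0 :=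
  stmt_11_general a K k ha hk1 hkK
end

section
/- For integers a >= 3, K >= 1, and 1 <= k <= K, (a*(a-1))^(K-k+1) * (a^k - (a-1)^k) >= a^(K+1) - (a-1)^(K+1). -/
/-!
Write `D m = b ^ m - (b - 1) ^ m`. Since `D (m + 1) = b * D m + (b - 1) ^ m` and
`(b - 1) ^ m ≤ D (m + 1)`, one step costs at most the factor `b * (b - 1)` as soon as
`b - 1 ≤ b * (b - 2)`, which holds for `b ≥ 3`; iterating from `k` to `K + 1` gives the claim.
-/

section

variable {R : Type*} [CommRing R] [LinearOrder R] [IsStrictOrderedRing R]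

theorem pow_sub_one_le_pow_succ_sub_pow_succ {b : R} (hb : 1 ≤ b) (m : ℕ) :
    (b - 1) ^ m ≤ b ^ (m + 1) - (b - 1) ^ (m + 1) := by
  have hpow : (b - 1) ^ m ≤ b ^ m := pow_le_pow_left₀ (by linarith) (by linarith) m
  calc (b - 1) ^ m ≤ (b - 1) ^ m + b * (b ^ m - (b - 1) ^ m) :=
        le_add_of_nonneg_right (mul_nonneg (by linarith) (sub_nonneg.mpr hpow))
    _ = b ^ (m + 1) - (b - 1) ^ (m + 1) := by ring

theorem pow_succ_sub_pow_succ_le_mul {b : R} (hb : 3 ≤ b) (m : ℕ) :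
    b ^ (m + 2) - (b - 1) ^ (m + 2) ≤ b * (b - 1) * (b ^ (m + 1) - (b - 1) ^ (m + 1)) := by
  have hgap := pow_sub_one_le_pow_succ_sub_pow_succ (by linarith : (1 : R) ≤ b) m
  have hquad : b - 1 ≤ b * (b - 2) := by nlinarith
  calc b ^ (m + 2) - (b - 1) ^ (m + 2)
      = b * (b ^ (m + 1) - (b - 1) ^ (m + 1)) + (b - 1) * (b - 1) ^ m := by ring
    _ ≤ b * (b ^ (m + 1) - (b - 1) ^ (m + 1)) + b * (b - 2) * (b - 1) ^ m := by
        gcongr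
        exact pow_nonneg (by linarith) m
    _ ≤ b * (b ^ (m + 1) - (b - 1) ^ (m + 1))
          + b * (b - 2) * (b ^ (m + 1) - (b - 1) ^ (m + 1)) := by
        gcongr
        exact mul_nonneg (by linarith) (by linarith)
    _ = b * (b - 1) * (b ^ (m + 1) - (b - 1) ^ (m + 1)) := by ring

theorem pow_add_sub_pow_add_le_mul_pow {b : R} (hb : 3 ≤ b) {k : ℕ} (hk : 1 ≤ k) (d : ℕ) :
    b ^ (k + d) - (b - 1) ^ (k + d) ≤ (b * (b - 1)) ^ d * (b ^ k - (b - 1) ^ k) := by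
  induction d with
  | zero => simp
  | succ d ih =>
    obtain ⟨m, hm⟩ : ∃ m, k + d = m + 1 := ⟨k + d - 1, by omega⟩
    rw [← add_assoc, hm]
    rw [hm] at ih
    calc b ^ (m + 1 + 1) - (b - 1) ^ (m + 1 + 1)
        ≤ b * (b - 1) * (b ^ (m + 1) - (b - 1) ^ (m + 1)) := pow_succ_sub_pow_succ_le_mul hb m
      _ ≤ b * (b - 1) * ((b * (b - 1)) ^ d * (b ^ k - (b - 1) ^ k)) := by
          gcongr
          exact mul_nonneg (by linarith) (by linarith)
      _ = (b * (b - 1)) ^ (d + 1) * (b ^ k - (b - 1) ^ k) := by ring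

end

theorem stmt_12_general (a K k : ℕ) (ha : 3 ≤ a) (hk1 : 1 ≤ k) (hkK : k ≤ K) :
    ((a : ℤ) * ((a : ℤ) - 1)) ^ (K - k + 1) * ((a : ℤ) ^ k - ((a : ℤ) - 1) ^ k) ≥
      (a : ℤ) ^ (K + 1) - ((a : ℤ) - 1) ^ (K + 1) := by
  have h := pow_add_sub_pow_add_le_mul_pow (by exact_mod_cast ha : (3 : ℤ) ≤ a) hk1 (K - k + 1)
  rwa [show k + (K - k + 1) = K + 1 by omega] at h

theorem stmt_12 (a K k : ℕ) (ha : 3 ≤ a) (hK : 1 ≤ K) (hk1 : 1 ≤ k) (hkK : k ≤ K) :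
    ((a : ℤ) * ((a : ℤ) - 1)) ^ (K - k + 1) * ((a : ℤ) ^ k - ((a : ℤ) - 1) ^ k) ≥
      (a : ℤ) ^ (K + 1) - ((a : ℤ) - 1) ^ (K + 1) :=
  stmt_12_general a K k ha hk1 hkK
end

section
/- For integers a >= 2, K >= 2, and 1 <= k <= K, (a^(K-k+1) - 1) / (a*(a^K - 1)) > ((a+1)^(K-k+1) - 1) / ((a+1)*((a+1)^K - 1)). -/
/-!
Dividing numerator and denominator by `a - 1` turns the profit into `S_m(a) / (a * S_K(a))` with
`S_n(x) = ∑_{i<n} x^i` and `m = K - k + 1 ∈ [1, K]`. For `x ≤ y` the ratio `S_n(y) / S_n(x)` is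
nondecreasing in `n`, because each new term satisfies `y^n / x^n ≥ y^i / x^i` for `i < n`. Hence
`S_m(y) / S_m(x) ≤ S_K(y) / S_K(x) < (y * S_K(y)) / (x * S_K(x))`, which is the claim for `x = a`,
`y = a + 1`.
-/

open Finset

section OrderedSemiring

variable {R : Type*} [CommSemiring R] [PartialOrder R] [IsOrderedRing R] {x y : R}

lemma pow_mul_pow_le_pow_mul_pow (hx : 0 ≤ x) (hxy : x ≤ y) {i n : ℕ} (hin : i ≤ n) :
    x ^ n * y ^ i ≤ x ^ i * y ^ n := by
  obtain ⟨d, rfl⟩ := Nat.exists_eq_add_of_le hin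
  have hy : 0 ≤ y := hx.trans hxy
  calc x ^ (i + d) * y ^ i = x ^ i * y ^ i * x ^ d := by ring
    _ ≤ x ^ i * y ^ i * y ^ d := by gcongr
    _ = x ^ i * y ^ (i + d) := by ring

lemma geom_sum_mul_pow_le (hx : 0 ≤ x) (hxy : x ≤ y) {m n : ℕ} (hmn : m ≤ n) :
    (∑ i ∈ range m, y ^ i) * x ^ n ≤ (∑ i ∈ range m, x ^ i) * y ^ n := by
  rw [sum_mul, sum_mul]
  refine sum_le_sum fun i hi => ?_
  rw [mul_comm]
  exact pow_mul_pow_le_pow_mul_pow hx hxy ((mem_range.mp hi).le.trans hmn)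

lemma geom_sum_mul_geom_sum_le (hx : 0 ≤ x) (hxy : x ≤ y) {m n : ℕ} (hmn : m ≤ n) :
    (∑ i ∈ range m, y ^ i) * ∑ i ∈ range n, x ^ i ≤
      (∑ i ∈ range m, x ^ i) * ∑ i ∈ range n, y ^ i := by
  induction n, hmn using Nat.le_induction with
  | base => rw [mul_comm]
  | succ n hmn ih =>
    rw [sum_range_succ, sum_range_succ, mul_add, mul_add]
    exact add_le_add ih (geom_sum_mul_pow_le hx hxy hmn)

end OrderedSemiring

lemma strictAntiOn_geom_sum_div_mul_geom_sum {R : Type*} [Field R] [LinearOrder R]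
    [IsStrictOrderedRing R] {m n : ℕ} (hm : m ≠ 0) (hmn : m ≤ n) :
    StrictAntiOn (fun x : R => (∑ i ∈ range m, x ^ i) / (x * ∑ i ∈ range n, x ^ i))
      (Set.Ioi 0) := by
  intro x (hx : 0 < x) y (hy : 0 < y) hxy
  have hn : n ≠ 0 := by omega
  have hSmx := geom_sum_pos hx.le hm
  have hSnx := geom_sum_pos hx.le hn
  have hSny := geom_sum_pos hy.le hn
  rw [div_lt_div_iff₀ (by positivity) (by positivity)]
  calc (∑ i ∈ range m, y ^ i) * (x * ∑ i ∈ range n, x ^ i)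
      = x * ((∑ i ∈ range m, y ^ i) * ∑ i ∈ range n, x ^ i) := by ring
    _ ≤ x * ((∑ i ∈ range m, x ^ i) * ∑ i ∈ range n, y ^ i) :=
      mul_le_mul_of_nonneg_left (geom_sum_mul_geom_sum_le hx.le hxy.le hmn) hx.le
    _ < y * ((∑ i ∈ range m, x ^ i) * ∑ i ∈ range n, y ^ i) :=
      mul_lt_mul_of_pos_right hxy (by positivity)
    _ = (∑ i ∈ range m, x ^ i) * (y * ∑ i ∈ range n, y ^ i) := by ring

lemma pow_sub_one_div_mul_pow_sub_one {R : Type*} [Field R] {x : R} (hx : x ≠ 1) (m n : ℕ) :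
    (x ^ m - 1) / (x * (x ^ n - 1)) = (∑ i ∈ range m, x ^ i) / (x * ∑ i ∈ range n, x ^ i) := by
  have hx1 : x - 1 ≠ 0 := sub_ne_zero.mpr hx
  rw [geom_sum_eq hx, geom_sum_eq hx, mul_div_assoc', div_div_div_cancel_right₀ hx1]

theorem stmt_13_general (a K k : ℕ) (ha : 2 ≤ a) (hk1 : 1 ≤ k) (hkK : k ≤ K) :
    ((a : ℝ) ^ (K - k + 1) - 1) / ((a : ℝ) * ((a : ℝ) ^ K - 1)) >
      (((a : ℝ) + 1) ^ (K - k + 1) - 1) / (((a : ℝ) + 1) * (((a : ℝ) + 1) ^ K - 1)) := by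
  have ha' : (2 : ℝ) ≤ a := by exact_mod_cast ha
  rw [gt_iff_lt, pow_sub_one_div_mul_pow_sub_one (by linarith),
    pow_sub_one_div_mul_pow_sub_one (by linarith)]
  exact strictAntiOn_geom_sum_div_mul_geom_sum (by omega) (by omega)
    (Set.mem_Ioi.mpr (by linarith)) (Set.mem_Ioi.mpr (by linarith)) (by linarith)

theorem stmt_13 (a K k : ℕ) (ha : 2 ≤ a) (hK : 2 ≤ K) (hk1 : 1 ≤ k) (hkK : k ≤ K) :
    ((a : ℝ) ^ (K - k + 1) - 1) / ((a : ℝ) * ((a : ℝ) ^ K - 1)) >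
      (((a : ℝ) + 1) ^ (K - k + 1) - 1) / (((a : ℝ) + 1) * (((a : ℝ) + 1) ^ K - 1)) :=
  stmt_13_general a K k ha hk1 hkK
end

section
/- Let a >= 2, K >= 1 be integers and B_1, ..., B_K nonnegative integers with B_k <= a^k. Define x = sum over k of B_k * (a^(K-k+1) - 1)/(a-1), y = a*(a^K - 1)/(a-1), x1 = sum over k of B_k * a^(K-k+1), y1 = a^(K+1). Then x/y <= x1/y1. -/
/-!
With `T = ∑ B k * a ^ (K - k + 1)` and `S = ∑ B k`, the factors `a - 1` cancel and both sides
carry a factor `1 / a`, so the claim reduces to `(T - S) / (a ^ K - 1) ≤ T / a ^ K`, that is,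
to `T ≤ S * a ^ K`. This holds term by term because `K - k + 1 ≤ K` for `k ≥ 1`.
-/

open Finset

theorem Finset.sum_mul_sub_one_div {ι R : Type*} [DivisionRing R] (s : Finset ι) (b w : ι → R)
    (c : R) : ∑ i ∈ s, b i * (w i - 1) / c = (∑ i ∈ s, b i * w i - ∑ i ∈ s, b i) / c := by
  simp only [← sum_div, ← sum_sub_distrib, mul_sub_one]

theorem sum_mul_pow_sub_add_one_le {R : Type*} [Semiring R] [PartialOrder R] [IsOrderedRing R]
    {a : R} (ha : 1 ≤ a) (K : ℕ) {b : ℕ → R} (hb : ∀ k ∈ Icc 1 K, 0 ≤ b k) :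
    ∑ k ∈ Icc 1 K, b k * a ^ (K - k + 1) ≤ (∑ k ∈ Icc 1 K, b k) * a ^ K := by
  rw [sum_mul]
  refine sum_le_sum fun k hk => ?_
  have hk' : K - k + 1 ≤ K := by
    simp only [mem_Icc] at hk; omega
  exact mul_le_mul_of_nonneg_left (pow_le_pow_right₀ ha hk') (hb k hk)

theorem sub_div_sub_one_le_div {R : Type*} [Field R] [LinearOrder R] [IsStrictOrderedRing R]
    {T S N : R} (hN : 1 < N) (h : T ≤ S * N) : (T - S) / (N - 1) ≤ T / N := by
  rw [div_le_div_iff₀ (by linarith) (by linarith)]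
  linear_combination h

theorem stmt_16_general (a K : ℕ) (ha : 2 ≤ a) (hK : 1 ≤ K) (B : ℕ → ℕ) :
    (∑ k ∈ Finset.Icc 1 K, (B k : ℝ) * ((a : ℝ) ^ (K - k + 1) - 1) / ((a : ℝ) - 1)) /
        ((a : ℝ) * ((a : ℝ) ^ K - 1) / ((a : ℝ) - 1)) ≤
      (∑ k ∈ Finset.Icc 1 K, (B k : ℝ) * (a : ℝ) ^ (K - k + 1)) / (a : ℝ) ^ (K + 1) := by
  have ha1 : (1 : ℝ) < a := by exact_mod_cast ha
  have haK : (1 : ℝ) < (a : ℝ) ^ K := one_lt_pow₀ ha1 (by omega)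
  rw [Finset.sum_mul_sub_one_div, div_div_div_cancel_right₀ (by linarith), mul_comm (a : ℝ),
    pow_succ, ← div_div, ← div_div]
  refine div_le_div_of_nonneg_right (sub_div_sub_one_le_div haK ?_) (by positivity)
  exact sum_mul_pow_sub_add_one_le ha1.le K fun k _ => Nat.cast_nonneg (B k)

theorem stmt_16 (a K : ℕ) (ha : 2 ≤ a) (hK : 1 ≤ K) (B : ℕ → ℕ)
    (hB : ∀ k ∈ Finset.Icc 1 K, B k ≤ a ^ k) :
    (∑ k ∈ Finset.Icc 1 K, (B k : ℝ) * ((a : ℝ) ^ (K - k + 1) - 1) / ((a : ℝ) - 1)) /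
        ((a : ℝ) * ((a : ℝ) ^ K - 1) / ((a : ℝ) - 1)) ≤
      (∑ k ∈ Finset.Icc 1 K, (B k : ℝ) * (a : ℝ) ^ (K - k + 1)) / (a : ℝ) ^ (K + 1) :=
  stmt_16_general a K ha hK B
end
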